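/- Let L be a labelling of the boundary cycle of a quadrangulated polygon by {1,2,3,4} identified with the corners (0,0),(1,0),(1,1),(0,1) of the unit square, such that no boundary edge has labels {1,3} or {2,4}. Then the induced piecewise-linear map from the boundary circle to the boundary of the unit square is well defined (misses the center), and its winding number around (1/2,1/2) equals deg([1,2],L) as defined by counting signed occurrences of consecutive pairs (1,2). -/

import Mathlib

/-- The corner of the unit square associated with a label in `{1,2,3,4}`
(encoded as `0,1,2,3 : Fin 4`): `1 ↦ (0,0)`, `2 ↦ (1,0)`, `3 ↦ (1,1)`,
`4 ↦ (0,1)`. -/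
def cornerOfLabel : Fin 4 → ℝ × ℝ
  | 0 => (0, 0)
  | 1 => (1, 0)
  | 2 => (1, 1)
  | 3 => (0, 1)

/-- The piecewise-linear boundary loop induced by a cyclic labelling
`L : ZMod m → Fin 4`: on `[k, k+1]` it joins `cornerOfLabel (L k)` to
`cornerOfLabel (L (k+1))` linearly. -/
noncomputable def boundaryLoop (m : ℕ) [NeZero m] (L : ZMod m → Fin 4) (t : ℝ) : ℝ × ℝ :=
  (1 - (t - ⌊t⌋)) • cornerOfLabel (L ((⌊t⌋ : ℤ) : ZMod m)) +
    (t - ⌊t⌋) • cornerOfLabel (L ((⌊t⌋ + 1 : ℤ) : ZMod m))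

/-- `deg([1,2],L)`: the number of cyclically consecutive pairs labelled
`(1,2)` minus the number labelled `(2,1)`. -/
def degOneTwo (m : ℕ) [NeZero m] (L : ZMod m → Fin 4) : ℤ :=
  ((Finset.univ.filter fun k : ZMod m => L k = 0 ∧ L (k + 1) = 1).card : ℤ) -
  ((Finset.univ.filter fun k : ZMod m => L k = 1 ∧ L (k + 1) = 0).card : ℤ)

/-!
Put the origin of `ℂ` at the centre of the square, so that the corner labelled `a` becomes
`ω a = ((-1 - I) / 2) * I ^ a`. An edge whose labels are equal or cyclically adjacent has
`ω b / ω a ∈ {1, I, -I}`, so after dividing by `ω a` the edge stays in the slit plane, where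
`arg` is a continuous angle: the edge misses the centre, and any continuous angle function turns
along it by exactly `arg (ω b / ω a)`, a signed number of quarter turns. Write that number as
the increment of a potential on labels plus `4` times the signed crossing of the edge `{1, 2}`,
where the potential jumps; around the cycle the potential telescopes away, leaving
`4 * deg([1,2], L)` quarter turns.
-/

open Real Set Complex

theorem Real.Angle.sub_eq_sub_of_coe_eq {a b : ℝ} (hab : a ≤ b) {f g : ℝ → ℝ}
    (hf : ContinuousOn f (Icc a b)) (hg : ContinuousOn g (Icc a b))
    (h : ∀ t ∈ Icc a b, (f t : Angle) = g t) : f b - f a = g b - g a := by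
  have hmaps : MapsTo (f - g) (Icc a b) (AddSubgroup.zmultiples (2 * π)) := fun t ht => by
    obtain ⟨k, hk⟩ := Real.Angle.angle_eq_iff_two_pi_dvd_sub.mp (h t ht)
    exact AddSubgroup.mem_zmultiples_iff.mpr ⟨k, by simp [hk, mul_comm]⟩
  have hconst := isPreconnected_Icc.constant_of_mapsTo
    (isDiscrete_iff_discreteTopology.mpr
      (inferInstanceAs (DiscreteTopology (AddSubgroup.zmultiples (2 * π)))))
    (hf.sub hg) hmaps (right_mem_Icc.mpr hab) (left_mem_Icc.mpr hab)
  simp only [Pi.sub_apply] at hconst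
  linarith

namespace Complex

theorem one_sub_add_mul_mem_slitPlane {q : ℂ} (hq : q ∈ slitPlane) {s : ℝ}
    (hs : s ∈ Icc (0 : ℝ) 1) : (1 - s : ℂ) + s * q ∈ slitPlane := by
  convert starConvex_one_slitPlane.add_smul_mem (y := q - 1) (by simpa using hq) hs.1 hs.2 using 1
  rw [real_smul]
  ring

theorem one_sub_mul_add_mul_eq_mul_div {z : ℂ} (hz : z ≠ 0) (w : ℂ) (s : ℝ) :
    (1 - s) * z + s * w = z * ((1 - s : ℂ) + s * (w / z)) := by
  field_simp

theorem one_sub_mul_add_mul_ne_zero {z w : ℂ} (hzw : w / z ∈ slitPlane) {s : ℝ}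
    (hs : s ∈ Icc (0 : ℝ) 1) : (1 - s) * z + s * w ≠ 0 := by
  have hz : z ≠ 0 := by rintro rfl; simp at hzw
  rw [one_sub_mul_add_mul_eq_mul_div hz]
  exact mul_ne_zero hz (slitPlane_ne_zero (one_sub_add_mul_mem_slitPlane hzw hs))

theorem sub_eq_arg_div_of_coe_angle_eq_arg {z w : ℂ} (hzw : w / z ∈ slitPlane)
    {θ : ℝ → ℝ} (hθ : ContinuousOn θ (Icc 0 1))
    (h : ∀ s ∈ Icc (0 : ℝ) 1, (θ s : Angle) = arg ((1 - s) * z + s * w)) :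
    θ 1 - θ 0 = arg (w / z) := by
  have hz : z ≠ 0 := by rintro rfl; simp at hzw
  have hmem := fun s (hs : s ∈ Icc (0 : ℝ) 1) => one_sub_add_mul_mem_slitPlane hzw hs
  have hlift := Real.Angle.sub_eq_sub_of_coe_eq zero_le_one hθ
    (g := fun s => arg z + arg ((1 - s : ℂ) + s * (w / z)))
    (continuousOn_const.add fun s hs =>
      (continuousAt_arg (hmem s hs)).comp_continuousWithinAt
        (f := fun s : ℝ => (1 - s : ℂ) + s * (w / z))
        (by fun_prop : Continuous _).continuousWithinAt)
    (fun s hs => by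
      rw [h s hs, one_sub_mul_add_mul_eq_mul_div hz,
        arg_mul_coe_angle hz (slitPlane_ne_zero (hmem s hs))]
      rfl)
  simpa using hlift

end Complex

theorem Finset.sum_range_natCast_zmod {M : Type*} [AddCommMonoid M] (m : ℕ) [NeZero m]
    (f : ZMod m → M) : ∑ i ∈ Finset.range m, f i = ∑ k : ZMod m, f k :=
  Finset.sum_nbij' (fun i => (i : ZMod m)) ZMod.val (fun _ _ => Finset.mem_univ _)
    (fun k _ => Finset.mem_range.mpr k.val_lt)
    (fun _ hi => ZMod.val_cast_of_lt (Finset.mem_range.mp hi))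
    (fun k _ => ZMod.natCast_zmod_val k) (fun _ _ => rfl)

noncomputable def centerOffset (p : ℝ × ℝ) : ℂ := ⟨p.1 - 1 / 2, p.2 - 1 / 2⟩

theorem centerOffset_one_sub_smul_add_smul (p q : ℝ × ℝ) (s : ℝ) :
    centerOffset ((1 - s) • p + s • q) = (1 - s) * centerOffset p + s * centerOffset q := by
  apply Complex.ext <;> simp [centerOffset] <;> ring

theorem coe_angle_eq_arg_centerOffset {p : ℝ × ℝ} {θ : ℝ} (hp : centerOffset p ≠ 0)
    (h : p - (1 / 2, 1 / 2) =
      √((p.1 - 1 / 2) ^ 2 + (p.2 - 1 / 2) ^ 2) • (Real.cos θ, Real.sin θ)) :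
    (θ : Angle) = arg (centerOffset p) := by
  have hpolar :
      centerOffset p = ‖centerOffset p‖ * (Real.Angle.cos θ + Real.Angle.sin θ * I) := by
    obtain ⟨h1, h2⟩ := Prod.ext_iff.mp h
    simp only [Prod.fst_sub, Prod.snd_sub, Prod.smul_fst, Prod.smul_snd, smul_eq_mul] at h1 h2
    apply Complex.ext <;>
      simp only [centerOffset, norm_eq_sqrt_sq_add_sq, Real.Angle.cos_coe, Real.Angle.sin_coe,
        add_re, add_im, mul_re, mul_im, ofReal_re, ofReal_im, I_re, I_im]
    · simpa using h1
    · simpa using h2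
  rw [hpolar, arg_mul_cos_add_sin_mul_I_coe_angle (norm_pos_iff.mpr hp)]

theorem centerOffset_cornerOfLabel_ne_zero (a : Fin 4) :
    centerOffset (cornerOfLabel a) ≠ 0 := by
  fin_cases a <;> norm_num [cornerOfLabel, centerOffset, Complex.ext_iff]

theorem centerOffset_cornerOfLabel_add_one (a : Fin 4) :
    centerOffset (cornerOfLabel (a + 1)) = I * centerOffset (cornerOfLabel a) := by
  fin_cases a <;> apply Complex.ext <;> simp [cornerOfLabel, centerOffset] <;> norm_num

theorem boundaryLoop_intCast_add (m : ℕ) [NeZero m] (L : ZMod m → Fin 4) (k : ℤ) {s : ℝ}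
    (hs : s ∈ Icc (0 : ℝ) 1) :
    boundaryLoop m L (k + s) =
      (1 - s) • cornerOfLabel (L k) + s • cornerOfLabel (L (k + 1)) := by
  rcases hs.2.lt_or_eq with hs1 | rfl
  · have hfloor : ⌊(k : ℝ) + s⌋ = k := by
      rw [Int.floor_intCast_add, Int.floor_eq_zero_iff.mpr ⟨hs.1, hs1⟩, add_zero]
    simp [boundaryLoop, hfloor]
  · have hfloor : ⌊(k : ℝ) + 1⌋ = k + 1 := by exact_mod_cast Int.floor_intCast (k + 1)
    simp [boundaryLoop, hfloor]

-- The corner `(1, 0)` (label `2`) gets potential `0`, so the potential jumps, by `4`, only across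
-- the edge `{1, 2}`.
def cornerPotential (a : Fin 4) : ℤ := ((a.val + 3) % 4 : ℕ)

def cutCrossing (a b : Fin 4) : ℤ :=
  (if a = 0 ∧ b = 1 then 1 else 0) - (if a = 1 ∧ b = 0 then 1 else 0)

def quarterTurns (a b : Fin 4) : ℤ := cornerPotential b - cornerPotential a + 4 * cutCrossing a b

theorem sum_quarterTurns (m : ℕ) [NeZero m] (L : ZMod m → Fin 4) :
    ∑ k : ZMod m, quarterTurns (L k) (L (k + 1)) = 4 * degOneTwo m L := by
  have htelescope : ∑ k : ZMod m, cornerPotential (L (k + 1)) = ∑ k, cornerPotential (L k) :=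
    Fintype.sum_equiv (Equiv.addRight 1) _ _ fun _ => rfl
  simp only [quarterTurns, cutCrossing, Finset.sum_add_distrib, Finset.sum_sub_distrib,
    htelescope, sub_self, zero_add, ← Finset.mul_sum, Finset.sum_boole, degOneTwo]

theorem eq_or_adjacent_of_not_diagonal {a b : Fin 4}
    (hab : ¬((a = 0 ∧ b = 2) ∨ (a = 2 ∧ b = 0) ∨
      (a = 1 ∧ b = 3) ∨ (a = 3 ∧ b = 1))) :
    (b = a ∧ quarterTurns a b = 0) ∨ (b = a + 1 ∧ quarterTurns a b = 1) ∨
      (a = b + 1 ∧ quarterTurns a b = -1) := by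
  revert a b
  decide

theorem cornerRatio_mem_slitPlane_and_arg {a b : Fin 4}
    (hab : ¬((a = 0 ∧ b = 2) ∨ (a = 2 ∧ b = 0) ∨
      (a = 1 ∧ b = 3) ∨ (a = 3 ∧ b = 1))) :
    centerOffset (cornerOfLabel b) / centerOffset (cornerOfLabel a) ∈ slitPlane ∧
      arg (centerOffset (cornerOfLabel b) / centerOffset (cornerOfLabel a)) =
        quarterTurns a b * (π / 2) := by
  rcases eq_or_adjacent_of_not_diagonal hab with ⟨rfl, h⟩ | ⟨rfl, h⟩ | ⟨rfl, h⟩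
  · simp [h, div_self (centerOffset_cornerOfLabel_ne_zero b)]
  · rw [centerOffset_cornerOfLabel_add_one,
      mul_div_cancel_right₀ _ (centerOffset_cornerOfLabel_ne_zero a), h]
    simp [arg_I, mem_slitPlane_iff]
  · rw [centerOffset_cornerOfLabel_add_one,
      div_mul_cancel_right₀ (centerOffset_cornerOfLabel_ne_zero b), inv_I, h]
    simp [arg_neg_I, mem_slitPlane_iff]

theorem sub_eq_arg_cornerRatio_of_boundaryLoop {m : ℕ} [NeZero m] {L : ZMod m → Fin 4}
    {θ : ℝ → ℝ} (hθ : Continuous θ)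
    (hangle : ∀ t, (θ t : Angle) = arg (centerOffset (boundaryLoop m L t))) (k : ℤ)
    (hk : centerOffset (cornerOfLabel (L (k + 1))) / centerOffset (cornerOfLabel (L k)) ∈
      slitPlane) :
    θ (k + 1) - θ k =
      arg (centerOffset (cornerOfLabel (L (k + 1))) / centerOffset (cornerOfLabel (L k))) := by
  have hedge := sub_eq_arg_div_of_coe_angle_eq_arg hk (θ := fun s => θ (k + s))
    (hθ.comp (continuous_const.add continuous_id)).continuousOn fun s hs => by
      rw [hangle, boundaryLoop_intCast_add m L k hs, centerOffset_one_sub_smul_add_smul]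
  simpa using hedge

/-- For a boundary labelling by `{1,2,3,4}` with no edge labelled `{1,3}` or
`{2,4}`, the induced piecewise-linear loop on the boundary of the unit square
misses the center `(1/2,1/2)`, and its winding number around the center
(computed from any continuous angular lift `θ`) equals `deg([1,2],L)`. -/
theorem boundary_winding_eq_deg (m : ℕ) [NeZero m] (L : ZMod m → Fin 4)
    (hdiag : ∀ k : ZMod m,
      ¬((L k = 0 ∧ L (k + 1) = 2) ∨ (L k = 2 ∧ L (k + 1) = 0) ∨
        (L k = 1 ∧ L (k + 1) = 3) ∨ (L k = 3 ∧ L (k + 1) = 1))) :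
    (∀ t : ℝ, boundaryLoop m L t ≠ (1 / 2, 1 / 2)) ∧
    (∀ θ : ℝ → ℝ, Continuous θ →
      (∀ t : ℝ, boundaryLoop m L t - (1 / 2, 1 / 2) =
        (Real.sqrt (((boundaryLoop m L t).1 - 1 / 2) ^ 2 +
            ((boundaryLoop m L t).2 - 1 / 2) ^ 2)) •
          (Real.cos (θ t), Real.sin (θ t))) →
      θ m - θ 0 = 2 * Real.pi * degOneTwo m L) := by
  have hedge := fun k => cornerRatio_mem_slitPlane_and_arg (hdiag k)
  have hne : ∀ t, centerOffset (boundaryLoop m L t) ≠ 0 := fun t => by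
    have hs : Int.fract t ∈ Icc (0 : ℝ) 1 := ⟨Int.fract_nonneg t, (Int.fract_lt_one t).le⟩
    rw [← Int.floor_add_fract t, boundaryLoop_intCast_add m L _ hs,
      centerOffset_one_sub_smul_add_smul]
    exact one_sub_mul_add_mul_ne_zero (hedge _).1 hs
  refine ⟨fun t hcenter => hne t (by simp [hcenter, centerOffset, Complex.ext_iff]),
    fun θ hθ hrep => ?_⟩
  have hangle := fun t => coe_angle_eq_arg_centerOffset (hne t) (hrep t)
  have hstep (i : ℕ) : θ (i + 1) - θ i = quarterTurns (L i) (L (i + 1)) * (π / 2) := by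
    simpa only [Int.cast_natCast, (hedge i).2] using
      sub_eq_arg_cornerRatio_of_boundaryLoop hθ hangle i
        (by simpa only [Int.cast_natCast] using (hedge i).1)
  calc θ m - θ 0 = ∑ i ∈ Finset.range m, (θ (i + 1) - θ i) := by
        simpa using (Finset.sum_range_sub (fun i : ℕ => θ i) m).symm
    _ = ∑ k : ZMod m, (quarterTurns (L k) (L (k + 1)) : ℝ) * (π / 2) := by
        rw [Finset.sum_congr rfl fun i _ => hstep i]
        exact Finset.sum_range_natCast_zmod m fun k =>
          (quarterTurns (L k) (L (k + 1)) : ℝ) * (π / 2)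
    _ = 2 * π * degOneTwo m L := by
        rw [← Finset.sum_mul, ← Int.cast_sum, sum_quarterTurns]; push_cast; ring
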